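/- Identify se(3) with ℝ³ × ℝ³ with adjoint operator ad_{(A,a)}(B,b) = (A × B, A × b + a × B). Let c : ℕ → ℝ, let (A,a), (B,b) ∈ ℝ³ × ℝ³ with α = ‖A‖ > 0 and ρ = A·a. Suppose the real series ∑_{k≥0} (−1)^k c_{2k+1} α^{2k}, ∑_{k≥0} (−1)^k c_{2k+2} α^{2k}, ∑_{k≥1} 2k·(−1)^k c_{2k+1} α^{2k−2}, and ∑_{k≥1} 2k·(−1)^k c_{2k+2} α^{2k−2} converge to g₁, g₂, g̃₁, g̃₂ respectively. Then ∑_{n≥0} c_n ad_{(A,a)}^n(B,b) converges in ℝ³ × ℝ³ to (C, c) with C = c₀ B + g₁ · A × B + g₂ · A × (A × B) and c = c₀ b + g₁ · (a × B + A × b) + ρ g̃₁ · A × B + ρ g̃₂ · A × (A × B) + g₂ · (a × (A × B) + A × (a × B) + A × (A × b)). -/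
import Mathlib


noncomputable section

/-- Cross product on ℝ³. -/
def cross (u v : Fin 3 → ℝ) : Fin 3 → ℝ :=
  ![u 1 * v 2 - u 2 * v 1, u 2 * v 0 - u 0 * v 2, u 0 * v 1 - u 1 * v 0]

/-- Euclidean inner product on ℝ³. -/
def dot (u v : Fin 3 → ℝ) : ℝ := u 0 * v 0 + u 1 * v 1 + u 2 * v 2

/-- Euclidean norm on ℝ³. -/
def norm3 (u : Fin 3 → ℝ) : ℝ := Real.sqrt (dot u u)

/-- The adjoint operator of 𝔰𝔢(3) ≅ ℝ³ × ℝ³. -/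
def ad (Aa : (Fin 3 → ℝ) × (Fin 3 → ℝ)) (Bb : (Fin 3 → ℝ) × (Fin 3 → ℝ)) :
    (Fin 3 → ℝ) × (Fin 3 → ℝ) :=
  (cross Aa.1 Bb.1, cross Aa.1 Bb.2 + cross Aa.2 Bb.1)


lemma cross_add (u v w : Fin 3 → ℝ) : cross u (v + w) = cross u v + cross u w := by
  funext i; fin_cases i <;> simp [cross] <;> ring

lemma cross_smul (r : ℝ) (u v : Fin 3 → ℝ) : cross u (r • v) = r • cross u v := by
  funext i; fin_cases i <;> simp [cross] <;> ring

lemma triple (A x : Fin 3 → ℝ) :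
    cross A (cross A (cross A x)) = (-(dot A A)) • cross A x := by
  funext i; fin_cases i <;> simp [cross, dot] <;> ring

lemma key2 (A a x : Fin 3 → ℝ) :
    cross A (cross A (cross a x)) =
      (-(dot A A)) • cross a x + (-(2 * dot A a)) • cross A x
        - cross A (cross a (cross A x)) - cross a (cross A (cross A x)) := by
  funext i; fin_cases i <;> simp [cross, dot] <;> ring

def wfun (d : ℝ) (k : ℕ) : ℝ := (-1) ^ k * d ^ k
def efun (d : ℝ) : ℕ → ℝ
  | 0 => 0
  | (k+1) => (2 * (k+1) : ℝ) * (-1) ^ (k+1) * d ^ k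

lemma wfun_succ (d : ℝ) (k : ℕ) : wfun d (k+1) = -d * wfun d k := by
  simp [wfun, pow_succ]; ring

lemma efun_succ (d : ℝ) (k : ℕ) : efun d (k+1) = -d * efun d k - 2 * wfun d k := by
  cases k with
  | zero => simp [efun, wfun]
  | succ n => simp only [efun, wfun]; push_cast; ring

lemma dot_self_nonneg (u : Fin 3 → ℝ) : 0 ≤ dot u u := by
  have := sq_nonneg (u 0); have := sq_nonneg (u 1); have := sq_nonneg (u 2)
  unfold dot; nlinarith

lemma norm3_pow (u : Fin 3 → ℝ) (k : ℕ) : norm3 u ^ (2 * k) = dot u u ^ k := by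
  rw [pow_mul, norm3, Real.sq_sqrt (dot_self_nonneg u)]

lemma iter_formula (A a B b : Fin 3 → ℝ) (k : ℕ) :
    (ad (A, a))^[2*k+1] (B, b) =
      (wfun (dot A A) k • cross A B,
       wfun (dot A A) k • (cross A b + cross a B)
         + (dot A a * efun (dot A A) k) • cross A B)
    ∧ (ad (A, a))^[2*k+2] (B, b) =
      (wfun (dot A A) k • cross A (cross A B),
       wfun (dot A A) k •
           (cross A (cross A b) + cross A (cross a B) + cross a (cross A B))
         + (dot A a * efun (dot A A) k) • cross A (cross A B)) := by
  induction k with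
  | zero =>
      constructor
      · simp [Function.iterate_one, ad, wfun, efun]
      · rw [show 2*0+2 = 0+1+1 from rfl, Function.iterate_succ_apply',
          Function.iterate_succ_apply', Function.iterate_zero_apply]
        simp only [ad, cross_add]
        simp [wfun, efun]
  | succ k ih =>
      have hodd :
          (ad (A, a))^[2*(k+1)+1] (B, b) =
            (wfun (dot A A) (k+1) • cross A B,
             wfun (dot A A) (k+1) • (cross A b + cross a B)
               + (dot A a * efun (dot A A) (k+1)) • cross A B) := by
        rw [show 2*(k+1)+1 = (2*k+2)+1 from by ring, Function.iterate_succ_apply', ih.2]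
        simp only [ad, cross_add, cross_smul, smul_add]
        rw [triple, triple, key2]
        refine Prod.ext ?_ ?_ <;> simp only [wfun_succ, efun_succ] <;>
          · show _ = _
            module
      refine ⟨hodd, ?_⟩
      rw [show 2*(k+1)+2 = (2*(k+1)+1)+1 from by ring, Function.iterate_succ_apply', hodd]
      simp only [ad, cross_add, cross_smul, smul_add]
      refine Prod.ext ?_ ?_ <;>
        · show _ = _
          module

/-- Evaluating an analytic function `φ(z) = ∑ cₙ zⁿ` of the adjoint operator of
𝔰𝔢(3) ≅ ℝ³ × ℝ³ in closed form. -/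
theorem analytic_of_ad_se3 (c : ℕ → ℝ) (A a B b : Fin 3 → ℝ) (g₁ g₂ gt₁ gt₂ : ℝ)
    (hpos : 0 < norm3 A)
    (h1 : HasSum (fun k : ℕ => (-1 : ℝ) ^ k * c (2 * k + 1) * norm3 A ^ (2 * k)) g₁)
    (h2 : HasSum (fun k : ℕ => (-1 : ℝ) ^ k * c (2 * k + 2) * norm3 A ^ (2 * k)) g₂)
    (h3 : HasSum
      (fun k : ℕ => (2 * (k + 1) : ℝ) * (-1 : ℝ) ^ (k + 1) * c (2 * (k + 1) + 1) *
        norm3 A ^ (2 * k)) gt₁)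
    (h4 : HasSum
      (fun k : ℕ => (2 * (k + 1) : ℝ) * (-1 : ℝ) ^ (k + 1) * c (2 * (k + 1) + 2) *
        norm3 A ^ (2 * k)) gt₂) :
    HasSum (fun n : ℕ => c n • ((ad (A, a))^[n] (B, b)))
      (c 0 • B + g₁ • cross A B + g₂ • cross A (cross A B),
       c 0 • b + g₁ • (cross a B + cross A b)
         + (dot A a * gt₁) • cross A B + (dot A a * gt₂) • cross A (cross A B)
         + g₂ • (cross a (cross A B) + cross A (cross a B) + cross A (cross A b))) := by
  set d := dot A A with hd
  set ρ := dot A a with hρ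
  simp only [norm3_pow] at h1 h2 h3 h4
  -- scalar series in closed form
  have hw1 : HasSum (fun k : ℕ => c (2 * k + 1) * wfun d k) g₁ := by
    have e : (fun k : ℕ => c (2 * k + 1) * wfun d k)
        = (fun k : ℕ => (-1 : ℝ) ^ k * c (2 * k + 1) * d ^ k) := by
      funext k; simp [wfun]; ring
    rw [e]; exact h1
  have hw2 : HasSum (fun k : ℕ => c (2 * k + 2) * wfun d k) g₂ := by
    have e : (fun k : ℕ => c (2 * k + 2) * wfun d k)
        = (fun k : ℕ => (-1 : ℝ) ^ k * c (2 * k + 2) * d ^ k) := by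
      funext k; simp [wfun]; ring
    rw [e]; exact h2
  have he1 : HasSum (fun k : ℕ => c (2 * k + 1) * efun d k) gt₁ := by
    have e : (fun k : ℕ => (fun n : ℕ => c (2 * n + 1) * efun d n) (k + 1))
        = (fun k : ℕ => (2 * (k + 1) : ℝ) * (-1 : ℝ) ^ (k + 1) * c (2 * (k + 1) + 1) * d ^ k) := by
      funext k
      show c (2 * (k + 1) + 1) * efun d (k + 1) = _
      simp [efun]; push_cast; ring
    have := (hasSum_nat_add_iff (f := fun n : ℕ => c (2 * n + 1) * efun d n) 1).mp (e ▸ h3)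
    simpa [efun] using this
  have he2 : HasSum (fun k : ℕ => c (2 * k + 2) * efun d k) gt₂ := by
    have e : (fun k : ℕ => (fun n : ℕ => c (2 * n + 2) * efun d n) (k + 1))
        = (fun k : ℕ => (2 * (k + 1) : ℝ) * (-1 : ℝ) ^ (k + 1) * c (2 * (k + 1) + 2) * d ^ k) := by
      funext k
      show c (2 * (k + 1) + 2) * efun d (k + 1) = _
      simp [efun]; push_cast; ring
    have := (hasSum_nat_add_iff (f := fun n : ℕ => c (2 * n + 2) * efun d n) 1).mp (e ▸ h4)
    simpa [efun] using this
  -- vector sums over odd indices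
  set f : ℕ → (Fin 3 → ℝ) × (Fin 3 → ℝ) := fun n => c n • ((ad (A, a))^[n] (B, b)) with hf
  have hodd : HasSum (fun k : ℕ => f (2 * k + 1))
      (g₁ • cross A B,
       g₁ • (cross A b + cross a B) + (ρ * gt₁) • cross A B) := by
    refine ((hw1.smul_const (cross A B)).prodMk
      ((hw1.smul_const (cross A b + cross a B)).add
        ((he1.mul_left ρ).smul_const (cross A B)))).congr_fun fun k => ?_
    show c (2 * k + 1) • ((ad (A, a))^[2 * k + 1] (B, b)) = _
    rw [(iter_formula A a B b k).1, Prod.smul_mk]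
    refine Prod.ext ?_ ?_ <;> · show _ = _; module
  -- vector sums over even positive indices
  have heven : HasSum (fun k : ℕ => f (2 * k + 2))
      (g₂ • cross A (cross A B),
       g₂ • (cross A (cross A b) + cross A (cross a B) + cross a (cross A B))
         + (ρ * gt₂) • cross A (cross A B)) := by
    refine ((hw2.smul_const (cross A (cross A B))).prodMk
      ((hw2.smul_const (cross A (cross A b) + cross A (cross a B) + cross a (cross A B))).add
        ((he2.mul_left ρ).smul_const (cross A (cross A B))))).congr_fun fun k => ?_
    show c (2 * k + 2) • ((ad (A, a))^[2 * k + 2] (B, b)) = _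
    rw [(iter_formula A a B b k).2, Prod.smul_mk]
    refine Prod.ext ?_ ?_ <;> · show _ = _; module
  -- even indices including 0
  have heven' : HasSum (fun k : ℕ => f (2 * k))
      ((g₂ • cross A (cross A B),
        g₂ • (cross A (cross A b) + cross A (cross a B) + cross a (cross A B))
          + (ρ * gt₂) • cross A (cross A B)) + f 0) := by
    have e : (fun k : ℕ => (fun n : ℕ => f (2 * n)) (k + 1)) = (fun k : ℕ => f (2 * k + 2)) := by
      funext k; simp [Nat.mul_succ]
    have := (hasSum_nat_add_iff (f := fun n : ℕ => f (2 * n)) 1).mp (e ▸ heven)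
    simpa using this
  have htot := heven'.even_add_odd hodd
  have hf0 : f 0 = (c 0 • B, c 0 • b) := by
    show c 0 • ((ad (A, a))^[0] (B, b)) = _
    rw [Function.iterate_zero_apply, Prod.smul_mk]
  rw [hf0] at htot
  simp only [Prod.mk_add_mk] at htot
  convert htot using 1
  refine Prod.ext ?_ ?_ <;> · show _ = _; module
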